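/- Let G = (V,E,c) be an edge-weighted directed graph without negative-weight closed walks, let R be a redundant edge set of G, and let A ⊆ E be such that for every (i,j) ∈ A there exists a walk from i to j in (V, E∖(R∪A), c) of weight at most c_{ij}. Then R ∪ A is a redundant edge set of G. -/

import Mathlib

/-- `l` is a walk in edge set `E`: a nonempty list of vertices with consecutive edges. -/
def IsWalk {V : Type*} (E : Set (V × V)) (l : List V) : Prop :=
  l ≠ [] ∧ l.Chain' (fun a b => (a, b) ∈ E)

/-- The weight of a walk: sum of edge weights along consecutive pairs (with multiplicity). -/
def walkWeight {V : Type*} (c : V → V → ℝ) (l : List V) : ℝ :=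
  ((l.zip l.tail).map fun p => c p.1 p.2).sum

/-- `l` is a walk from `u` to `v`. -/
def IsWalkFrom {V : Type*} (E : Set (V × V)) (u v : V) (l : List V) : Prop :=
  IsWalk E l ∧ l.head? = some u ∧ l.getLast? = some v

/-- A closed walk: a walk with at least one edge whose first and last vertices agree. -/
def IsClosedWalk {V : Type*} (E : Set (V × V)) (l : List V) : Prop :=
  IsWalk E l ∧ 2 ≤ l.length ∧ l.head? = l.getLast?

/-- A simple path from `u` to `v`: a walk with all traversed vertices distinct. -/
def IsPathFrom {V : Type*} (E : Set (V × V)) (u v : V) (l : List V) : Prop :=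
  IsWalkFrom E u v l ∧ l.Nodup

/-- A cycle: a closed walk all of whose vertices other than the repeated endpoint are distinct. -/
def IsCycle {V : Type*} (E : Set (V × V)) (l : List V) : Prop :=
  IsClosedWalk E l ∧ l.tail.Nodup

/-- `x` satisfies the precedence relation system of `(V, E, c)`. -/
def Satisfies {V : Type*} (E : Set (V × V)) (c : V → V → ℝ) (x : V → ℝ) : Prop :=
  ∀ e ∈ E, x e.1 - x e.2 ≤ c e.1 e.2

/-- `R` is a redundant edge set of `(V, E, c)`: every edge of `R` has a replacement path
in the reduced graph of no greater weight. -/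
def IsRedundantEdgeSet {V : Type*} (E : Set (V × V)) (c : V → V → ℝ)
    (R : Set (V × V)) : Prop :=
  R ⊆ E ∧ ∀ e ∈ R, ∃ l, IsPathFrom (E \ R) e.1 e.2 l ∧ walkWeight c l ≤ c e.1 e.2

/-- `w` is the minimum weight of a walk from `i` to `j` in `(V, E, c)` (attained). -/
def IsMinWalkWeight {V : Type*} (E : Set (V × V)) (c : V → V → ℝ) (i j : V) (w : ℝ) : Prop :=
  (∃ l, IsWalkFrom E i j l ∧ walkWeight c l = w) ∧
  ∀ l, IsWalkFrom E i j l → w ≤ walkWeight c l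

/-- The relation `∼`: `i ∼ j` iff `i = j` or some zero-weight closed walk traverses both. -/
def Sim {V : Type*} (E : Set (V × V)) (c : V → V → ℝ) (i j : V) : Prop :=
  i = j ∨ ∃ l, IsClosedWalk E l ∧ walkWeight c l = 0 ∧ i ∈ l ∧ j ∈ l

/-!
Replacing each `A`-edge of the replacement path of an `R`-edge by its own replacement walk
yields a walk in `E ∖ (R ∪ A)` of no larger weight. Since closed walks have nonnegative weight,
cutting closed subwalks out of a walk turns it into a simple path of no larger weight.
-/

section Walks

variable {V : Type*} {E F G : Set (V × V)} {c : V → V → ℝ} {u v x a b : V}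

theorem List.exists_eq_append_cons_append_cons_of_not_nodup {l : List V} (h : ¬ l.Nodup) :
    ∃ x l₁ l₂ l₃, l = l₁ ++ x :: (l₂ ++ x :: l₃) := by
  obtain ⟨x, hx⟩ : ∃ x, List.Sublist [x, x] l := by simpa [List.nodup_iff_sublist] using h
  obtain ⟨r₁, r₂, rfl, hx₁, hx₂⟩ := List.cons_sublist_iff.mp hx
  obtain ⟨l₁, t, rfl⟩ := List.append_of_mem hx₁
  obtain ⟨s, l₃, rfl⟩ := List.append_of_mem (List.singleton_sublist.mp hx₂)
  exact ⟨x, l₁, t ++ s, l₃, by simp⟩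

@[simp]
theorem walkWeight_singleton (a : V) : walkWeight c [a] = 0 := by
  simp [walkWeight]

@[simp]
theorem walkWeight_cons_cons (a b : V) (l : List V) :
    walkWeight c (a :: b :: l) = c a b + walkWeight c (b :: l) := by
  simp [walkWeight]

theorem walkWeight_append_cons (l₁ l₂ : List V) (x : V) :
    walkWeight c (l₁ ++ x :: l₂) = walkWeight c (l₁ ++ [x]) + walkWeight c (x :: l₂) := by
  induction l₁ with
  | nil => simp
  | cons a t ih =>
    cases t with
    | nil => simp
    | cons b t => simp only [List.cons_append, walkWeight_cons_cons] at ih ⊢; rw [ih]; ring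

theorem isWalk_iff {l : List V} : IsWalk E l ↔ l ≠ [] ∧ l.IsChain fun a b => (a, b) ∈ E :=
  Iff.rfl

theorem IsWalk.mono (hEF : E ⊆ F) {l : List V} (hl : IsWalk E l) : IsWalk F l :=
  ⟨hl.1, hl.2.imp fun _ _ h => hEF h⟩

theorem IsClosedWalk.mono (hEF : E ⊆ F) {l : List V} (hl : IsClosedWalk E l) :
    IsClosedWalk F l :=
  ⟨hl.1.mono hEF, hl.2⟩

theorem isWalkFrom_singleton : IsWalkFrom E u v [a] ↔ u = a ∧ v = a := by
  simp [IsWalkFrom, isWalk_iff, eq_comm]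

theorem isWalkFrom_cons_cons {l : List V} :
    IsWalkFrom E u v (a :: b :: l) ↔ u = a ∧ (a, b) ∈ E ∧ IsWalkFrom E b v (b :: l) := by
  simp only [IsWalkFrom, isWalk_iff, ne_eq, reduceCtorEq, not_false_eq_true,
    List.isChain_cons_cons, true_and, List.head?_cons, eq_comm, Option.some.injEq,
    List.getLast?_cons_cons]
  tauto

theorem isWalkFrom_append_cons {l₁ l₂ : List V} :
    IsWalkFrom E u v (l₁ ++ x :: l₂) ↔
      IsWalkFrom E u x (l₁ ++ [x]) ∧ IsWalkFrom E x v (x :: l₂) := by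
  have hhead : (l₁ ++ x :: l₂).head? = (l₁ ++ [x]).head? := by cases l₁ <;> simp
  rw [IsWalkFrom, IsWalkFrom, IsWalkFrom, isWalk_iff, isWalk_iff, isWalk_iff, List.isChain_split,
    hhead, List.getLast?_append_cons]
  simp only [ne_eq, List.append_eq_nil_iff, reduceCtorEq, and_false, not_false_eq_true, true_and,
    List.getLast?_append, List.getLast?_singleton, Option.some_or, and_true]
  tauto

theorem IsWalkFrom.append {p q : List V} (hp : IsWalkFrom E u x p) (hq : IsWalkFrom E x v q) :
    ∃ r, IsWalkFrom E u v r ∧ walkWeight c r = walkWeight c p + walkWeight c q := by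
  obtain ⟨p, rfl⟩ := List.getLast?_eq_some_iff.mp hp.2.2
  obtain ⟨q, rfl⟩ := List.head?_eq_some_iff.mp hq.2.1
  exact ⟨p ++ x :: q, isWalkFrom_append_cons.mpr ⟨hp, hq⟩, walkWeight_append_cons p q x⟩

theorem IsWalkFrom.isClosedWalk {x : V} {l : List V} (hl : IsWalkFrom E x x (x :: l ++ [x])) :
    IsClosedWalk E (x :: l ++ [x]) :=
  ⟨hl.1, by simp, by rw [hl.2.1, hl.2.2]⟩

theorem exists_isPathFrom_le_of_isWalkFrom
    (hnn : ∀ l : List V, IsClosedWalk E l → 0 ≤ walkWeight c l) {l : List V}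
    (hl : IsWalkFrom E u v l) :
    ∃ p, IsPathFrom E u v p ∧ walkWeight c p ≤ walkWeight c l := by
  by_cases hnd : l.Nodup
  · exact ⟨l, ⟨hl, hnd⟩, le_rfl⟩
  obtain ⟨x, l₁, l₂, l₃, rfl⟩ := List.exists_eq_append_cons_append_cons_of_not_nodup hnd
  obtain ⟨h₁, h₂₃⟩ := isWalkFrom_append_cons.mp hl
  rw [← List.cons_append, isWalkFrom_append_cons] at h₂₃
  obtain ⟨h₂, h₃⟩ := h₂₃
  have hloop := hnn _ h₂.isClosedWalk
  have hshorter : (l₁ ++ x :: l₃).length < (l₁ ++ x :: (l₂ ++ x :: l₃)).length := by simp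
  obtain ⟨p, hp, hpw⟩ :=
    exists_isPathFrom_le_of_isWalkFrom hnn (isWalkFrom_append_cons.mpr ⟨h₁, h₃⟩)
  refine ⟨p, hp, hpw.trans ?_⟩
  rw [walkWeight_append_cons l₁ l₃, walkWeight_append_cons l₁ (l₂ ++ x :: l₃),
    ← List.cons_append, walkWeight_append_cons (x :: l₂) l₃]
  linarith
termination_by l.length

theorem exists_isWalkFrom_le_of_forall_mem
    (hrep : ∀ e ∈ F, ∃ l, IsWalkFrom G e.1 e.2 l ∧ walkWeight c l ≤ c e.1 e.2)
    {l : List V} (hl : IsWalkFrom F u v l) :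
    ∃ l', IsWalkFrom G u v l' ∧ walkWeight c l' ≤ walkWeight c l := by
  induction l generalizing u with
  | nil => exact absurd rfl hl.1.1
  | cons a t ih =>
    cases t with
    | nil => exact ⟨[a], isWalkFrom_singleton.mpr (isWalkFrom_singleton.mp hl), le_rfl⟩
    | cons b t =>
      obtain ⟨rfl, hab, hrest⟩ := isWalkFrom_cons_cons.mp hl
      obtain ⟨m, hm, hmw⟩ := ih hrest
      obtain ⟨w, hw, hww⟩ := hrep _ hab
      obtain ⟨r, hr, hrw⟩ := hw.append (c := c) hm
      exact ⟨r, hr, by rw [hrw, walkWeight_cons_cons]; linarith⟩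

end Walks

theorem stmt15 {V : Type*} (E : Set (V × V)) (c : V → V → ℝ)
    (hnn : ∀ l : List V, IsClosedWalk E l → 0 ≤ walkWeight c l)
    (R A : Set (V × V)) (hR : IsRedundantEdgeSet E c R) (hA : A ⊆ E)
    (h : ∀ e ∈ A, ∃ l : List V,
      IsWalkFrom (E \ (R ∪ A)) e.1 e.2 l ∧ walkWeight c l ≤ c e.1 e.2) :
    IsRedundantEdgeSet E c (R ∪ A) := by
  have hnn' : ∀ l, IsClosedWalk (E \ (R ∪ A)) l → 0 ≤ walkWeight c l :=
    fun l hl => hnn l (hl.mono Set.sdiff_subset)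
  have hrep : ∀ e ∈ E \ R,
      ∃ l, IsWalkFrom (E \ (R ∪ A)) e.1 e.2 l ∧ walkWeight c l ≤ c e.1 e.2 := by
    rintro ⟨a, b⟩ ⟨heE, heR⟩
    by_cases heA : (a, b) ∈ A
    · exact h _ heA
    · have hab : (a, b) ∈ E \ (R ∪ A) := ⟨heE, fun he => he.elim heR heA⟩
      have hwalk : IsWalkFrom (E \ (R ∪ A)) a b [a, b] :=
        isWalkFrom_cons_cons.mpr ⟨rfl, hab, isWalkFrom_singleton.mpr ⟨rfl, rfl⟩⟩
      exact ⟨[a, b], hwalk, by simp⟩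
  refine ⟨Set.union_subset hR.1 hA, ?_⟩
  rintro e (heR | heA)
  · obtain ⟨l, hl, hlw⟩ := hR.2 e heR
    obtain ⟨l', hl', hl'w⟩ := exists_isWalkFrom_le_of_forall_mem hrep hl.1
    obtain ⟨p, hp, hpw⟩ := exists_isPathFrom_le_of_isWalkFrom hnn' hl'
    exact ⟨p, hp, by linarith⟩
  · obtain ⟨l, hl, hlw⟩ := h e heA
    obtain ⟨p, hp, hpw⟩ := exists_isPathFrom_le_of_isWalkFrom hnn' hl
    exact ⟨p, hp, hpw.trans hlw⟩
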